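/- Let P be a nonempty compact convex subset of ℝⁿ, f, g : ℝⁿ → ℝ convex and differentiable, F = f + g, with curvature-type constant C_F ≥ 0, i.e., F((1−α)x + αy) ≤ F(x) + α⟨∇F(x), y − x⟩ + (C_F/2)α² for all x, y ∈ P and α ∈ [0,1]. Let x⋆ ∈ P minimize F over P. Let (x_k) be generated by the generalized conditional gradient algorithm: x_0 ∈ P, and for each k, s_k minimizes u ↦ ⟨∇f(x_k), u⟩ + g(u) over P and x_{k+1} = x_k + α_k (s_k − x_k) with step α_k = 2/(k+2). Then for each k ≥ 1, F(x_k) − F(x⋆) ≤ 2C_F/(k+2). -/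

import Mathlib

open RealInnerProductSpace

/-!
Write `F = f + g` and `h k = F (x k) - F x⋆`. Only `f` is linearized in the subproblem, but `g`
is convex too, so the first-order inequalities for `f` and `g`, together with the minimality of
`s k`, give `⟪∇F (x k), s k - x k⟫ ≤ F x⋆ - F (x k)`. Inserting this into the curvature bound
yields `h (k+1) ≤ (1 - α k) h k + C_F/2 α k²`. Since `α 0 = 1`, this gives `h 1 ≤ C_F/2`
whatever `h 0` is, and with `α k = 2/(k+2)` an induction gives `h k ≤ 2 C_F/(k+2)`.
-/

open Set

section FirstOrder

variable {E : Type*} [NormedAddCommGroup E] [InnerProductSpace ℝ E] [CompleteSpace E]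
  {f g : E → ℝ} {x : E}

theorem ConvexOn.inner_gradient_sub_le (hf : ConvexOn ℝ univ f) (hd : DifferentiableAt ℝ f x)
    (y : E) : ⟪gradient f x, y - x⟫ ≤ f y - f x := by
  have hline : ConvexOn ℝ univ (f ∘ AffineMap.lineMap (k := ℝ) x y) := hf.comp_affineMap _
  have hderiv : HasDerivAt (f ∘ AffineMap.lineMap (k := ℝ) x y) (fderiv ℝ f x (y - x)) 0 :=
    hd.hasFDerivAt.comp_hasDerivAt_of_eq 0 AffineMap.hasDerivAt_lineMap
      (AffineMap.lineMap_apply_zero x y).symm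
  simpa [slope_def_field] using
    hline.le_slope_of_hasDerivAt (mem_univ 0) (mem_univ 1) one_pos hderiv

theorem gradient_fun_add (hf : DifferentiableAt ℝ f x) (hg : DifferentiableAt ℝ g x) :
    gradient (fun z => f z + g z) x = gradient f x + gradient g x :=
  HasGradientAt.gradient <| by
    rw [hasGradientAt_iff_hasFDerivAt, map_add]
    exact hf.hasGradientAt.hasFDerivAt.add hg.hasGradientAt.hasFDerivAt

theorem inner_gradient_add_sub_le_of_isMinOn {P : Set E} {s y : E}
    (hf : ConvexOn ℝ univ f) (hg : ConvexOn ℝ univ g)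
    (hfd : DifferentiableAt ℝ f x) (hgd : DifferentiableAt ℝ g x)
    (hs : IsMinOn (fun u => ⟪gradient f x, u⟫ + g u) P s) (hy : y ∈ P) :
    ⟪gradient (fun z => f z + g z) x, s - x⟫ ≤ (f y + g y) - (f x + g x) := by
  have hsy : ⟪gradient f x, s⟫ + g s ≤ ⟪gradient f x, y⟫ + g y := hs hy
  have hgs := hg.inner_gradient_sub_le hgd s
  have hfy := hf.inner_gradient_sub_le hfd y
  rw [gradient_fun_add hfd hgd, inner_add_left]
  simp only [inner_sub_right] at *
  linarith

end FirstOrder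

theorem le_two_mul_div_of_recurrence {h : ℕ → ℝ} {C : ℝ} (hC : 0 ≤ C)
    (hrec : ∀ k : ℕ,
      h (k + 1) ≤ (1 - 2 / ((k : ℝ) + 2)) * h k + C / 2 * (2 / ((k : ℝ) + 2)) ^ 2) :
    ∀ k : ℕ, 1 ≤ k → h k ≤ 2 * C / ((k : ℝ) + 2) := by
  intro k hk
  induction k, hk using Nat.le_induction with
  | base => have := hrec 0; norm_num at this ⊢; linarith
  | succ k hk ih =>
    have hk2 : (0 : ℝ) < k + 2 := by positivity
    have hcoef : 0 ≤ 1 - 2 / ((k : ℝ) + 2) := by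
      rw [sub_nonneg, div_le_one hk2]; linarith [(Nat.one_le_cast (α := ℝ)).2 hk]
    calc h (k + 1)
        ≤ (1 - 2 / ((k : ℝ) + 2)) * (2 * C / (k + 2)) + C / 2 * (2 / ((k : ℝ) + 2)) ^ 2 := by
          refine (hrec k).trans ?_; gcongr
      _ = 2 * C * (k + 1) / (k + 2) ^ 2 := by field_simp; ring
      _ ≤ 2 * C / ((k + 1 : ℕ) + 2) := by
          rw [div_le_div_iff₀ (by positivity) (by positivity)]; push_cast; nlinarith

theorem stmt_12_general (n : ℕ) (P : Set (EuclideanSpace ℝ (Fin n)))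
    (hPconv : Convex ℝ P)
    (f g : EuclideanSpace ℝ (Fin n) → ℝ)
    (hfconv : ConvexOn ℝ Set.univ f) (hgconv : ConvexOn ℝ Set.univ g)
    (hfdiff : Differentiable ℝ f) (hgdiff : Differentiable ℝ g)
    (CF : ℝ) (hCF : 0 ≤ CF)
    (hcurv : ∀ x ∈ P, ∀ y ∈ P, ∀ α ∈ Set.Icc (0 : ℝ) 1,
      f ((1 - α) • x + α • y) + g ((1 - α) • x + α • y) ≤
        f x + g x + α * ⟪gradient (fun z => f z + g z) x, y - x⟫ + CF / 2 * α ^ 2)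
    (xstar : EuclideanSpace ℝ (Fin n)) (hxstar : xstar ∈ P)
    (x s : ℕ → EuclideanSpace ℝ (Fin n)) (hx0 : x 0 ∈ P)
    (hsP : ∀ k, s k ∈ P)
    (hsmin : ∀ k, IsMinOn (fun u => ⟪gradient f (x k), u⟫ + g u) P (s k))
    (hstep : ∀ k : ℕ, x (k + 1) = x k + (2 / ((k : ℝ) + 2)) • (s k - x k)) :
    ∀ k : ℕ, 1 ≤ k →
      (f (x k) + g (x k)) - (f xstar + g xstar) ≤ 2 * CF / ((k : ℝ) + 2) := by
  have hα : ∀ k : ℕ, 2 / ((k : ℝ) + 2) ∈ Icc (0 : ℝ) 1 := fun k =>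
    ⟨by positivity, (div_le_one (by positivity)).2 (by linarith [k.cast_nonneg (α := ℝ)])⟩
  have hxP : ∀ k, x k ∈ P := by
    intro k
    induction k with
    | zero => exact hx0
    | succ k ih => rw [hstep k]; exact hPconv.add_smul_sub_mem ih (hsP k) (hα k)
  refine le_two_mul_div_of_recurrence hCF fun k => ?_
  have hdesc := inner_gradient_add_sub_le_of_isMinOn hfconv hgconv (hfdiff (x k)) (hgdiff (x k))
    (hsmin k) hxstar
  have hcurv_k := hcurv (x k) (hxP k) (s k) (hsP k) _ (hα k)
  have hnext : (1 - 2 / ((k : ℝ) + 2)) • x k + (2 / ((k : ℝ) + 2)) • s k = x (k + 1) := by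
    rw [hstep k]; module
  rw [hnext] at hcurv_k
  nlinarith [mul_le_mul_of_nonneg_left hdesc (hα k).1]

/-- rate with fixed steps: the generalized conditional gradient iterates with
steps `α_k = 2/(k+2)` satisfy `F x_k - F x⋆ ≤ 2 C_F/(k+2)` for all `k ≥ 1`. -/
theorem stmt_12 (n : ℕ) (P : Set (EuclideanSpace ℝ (Fin n)))
    (hPne : P.Nonempty) (hPcpt : IsCompact P) (hPconv : Convex ℝ P)
    (f g : EuclideanSpace ℝ (Fin n) → ℝ)
    (hfconv : ConvexOn ℝ Set.univ f) (hgconv : ConvexOn ℝ Set.univ g)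
    (hfdiff : Differentiable ℝ f) (hgdiff : Differentiable ℝ g)
    (CF : ℝ) (hCF : 0 ≤ CF)
    (hcurv : ∀ x ∈ P, ∀ y ∈ P, ∀ α ∈ Set.Icc (0 : ℝ) 1,
      f ((1 - α) • x + α • y) + g ((1 - α) • x + α • y) ≤
        f x + g x + α * ⟪gradient (fun z => f z + g z) x, y - x⟫ + CF / 2 * α ^ 2)
    (xstar : EuclideanSpace ℝ (Fin n)) (hxstar : xstar ∈ P)
    (hmin : IsMinOn (fun x => f x + g x) P xstar)
    (x s : ℕ → EuclideanSpace ℝ (Fin n)) (hx0 : x 0 ∈ P)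
    (hsP : ∀ k, s k ∈ P)
    (hsmin : ∀ k, IsMinOn (fun u => ⟪gradient f (x k), u⟫ + g u) P (s k))
    (hstep : ∀ k : ℕ, x (k + 1) = x k + (2 / ((k : ℝ) + 2)) • (s k - x k)) :
    ∀ k : ℕ, 1 ≤ k →
      (f (x k) + g (x k)) - (f xstar + g xstar) ≤ 2 * CF / ((k : ℝ) + 2) :=
  stmt_12_general n P hPconv f g hfconv hgconv hfdiff hgdiff CF hCF hcurv xstar hxstar x s hx0 hsP
    hsmin hstep
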